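/- The squared frequency-limited H₂ norm of an LQO system equals trace(Bᵀ Q_ω B), where Q_ω = Y_ω + Z_ω is the frequency-limited observability Gramian; i.e., ‖G‖²_{H₂,ω} = trace(Bᵀ(Y_ω + Z_ω)B). -/
import Mathlib

set_option maxHeartbeats 1000000

open Matrix

variable {ι κ ρ : Type*} [Fintype ι] [DecidableEq ι] [Fintype κ] [DecidableEq κ]
  [Fintype ρ] [DecidableEq ρ]

/-- The resolvent `(jνI - A)⁻¹`. -/
noncomputable def resolvMat (A : Matrix ι ι ℂ) (ν : ℝ) : Matrix ι ι ℂ :=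
  ((Complex.I * (ν : ℂ)) • (1 : Matrix ι ι ℂ) - A)⁻¹

/-- Frequency-limited controllability Gramian (entrywise integral). -/
noncomputable def Pfl (A : Matrix ι ι ℂ) (B : Matrix ι κ ℂ) (ω : ℝ) : Matrix ι ι ℂ :=
  Matrix.of fun i j => (1 / (2 * (Real.pi : ℂ))) *
    ∫ ν in (-ω)..ω, (resolvMat A ν * B * Bᴴ * (resolvMat A ν)ᴴ) i j

/-- `Y_ω = (1/2π) ∫ (jνI-A)⁻ᴴ Cᵀ C (jνI-A)⁻¹ dν`. -/
noncomputable def Yfl (A : Matrix ι ι ℂ) (C : Matrix ρ ι ℂ) (ω : ℝ) : Matrix ι ι ℂ :=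
  Matrix.of fun i j => (1 / (2 * (Real.pi : ℂ))) *
    ∫ ν in (-ω)..ω, ((resolvMat A ν)ᴴ * Cᵀ * C * resolvMat A ν) i j

/-- `Z_ω = (1/2π) ∫ (jν₁I-A)⁻ᴴ (Σᵢ Mᵢ P_ω Mᵢ) (jν₁I-A)⁻¹ dν₁`. -/
noncomputable def Zfl {p : ℕ} (A : Matrix ι ι ℂ) (B : Matrix ι κ ℂ)
    (M : Fin p → Matrix ι ι ℂ) (ω : ℝ) : Matrix ι ι ℂ :=
  Matrix.of fun i j => (1 / (2 * (Real.pi : ℂ))) *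
    ∫ ν₁ in (-ω)..ω,
      ((resolvMat A ν₁)ᴴ * (∑ l, M l * Pfl A B ω * M l) * resolvMat A ν₁) i j

/-- The squared frequency-limited H₂ norm of an LQO system, defined via the frequency
domain integrals of `G₁(jν) = C(jνI-A)⁻¹B` and
`G₂ᵢ(jν₁, jν₂) = Bᵀ(jν₁I-A)⁻ᴴ Mᵢ (jν₂I-A)⁻¹ B`. -/
noncomputable def H2flSq {p : ℕ} (A : Matrix ι ι ℂ) (B : Matrix ι κ ℂ) (C : Matrix ρ ι ℂ)
    (M : Fin p → Matrix ι ι ℂ) (ω : ℝ) : ℂ :=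
  (Matrix.of fun i j => (1 / (2 * (Real.pi : ℂ))) *
      ∫ ν in (-ω)..ω,
        ((C * resolvMat A ν * B)ᴴ * (C * resolvMat A ν * B)) i j : Matrix κ κ ℂ).trace
  + (Matrix.of fun i j => (1 / (2 * (Real.pi : ℂ)))^2 *
      ∫ ν₁ in (-ω)..ω, ∫ ν₂ in (-ω)..ω,
        (∑ l, (Bᵀ * (resolvMat A ν₁)ᴴ * M l * resolvMat A ν₂ * B)ᴴ
          * (Bᵀ * (resolvMat A ν₁)ᴴ * M l * resolvMat A ν₂ * B)) i j : Matrix κ κ ℂ).trace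

section Aux

open MeasureTheory

lemma trace_eq_sum_diag (Z : Matrix κ κ ℂ) : Z.trace = ∑ k, Z k k := rfl

lemma entry_int {ω : ℝ} (c : ℂ) {G : ℝ → Matrix ι ι ℂ} (hG : Continuous G)
    (X : Matrix κ ι ℂ) (Y : Matrix ι κ ℂ) (k k' : κ) :
    (X * (Matrix.of fun i j => c * ∫ ν in (-ω)..ω, G ν i j) * Y) k k'
      = c * ∫ ν in (-ω)..ω, (X * G ν * Y) k k' := by
  have hGij : ∀ i j, IntervalIntegrable (fun ν => G ν i j) volume (-ω) ω :=
    fun i j => ((hG.matrix_elem i j)).intervalIntegrable _ _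
  have h1 : ∀ (i : ι) (j : ι), IntervalIntegrable
      (fun ν => X k i * G ν i j * Y j k') volume (-ω) ω :=
    fun i j => ((hGij i j).const_mul _).mul_const _
  have h2 : (∫ ν in (-ω)..ω, ∑ j, ∑ i, X k i * G ν i j * Y j k')
      = ∑ j, ∑ i, X k i * (∫ ν in (-ω)..ω, G ν i j) * Y j k' := by
    rw [intervalIntegral.integral_finset_sum
      (f := fun j ν => ∑ i, X k i * G ν i j * Y j k')
      (fun j _ => ((continuous_finset_sum _ fun i _ =>
        (continuous_const.mul (hG.matrix_elem i j)).mul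
          continuous_const).intervalIntegrable _ _))]
    refine Finset.sum_congr rfl fun j _ => ?_
    rw [intervalIntegral.integral_finset_sum
      (f := fun i ν => X k i * G ν i j * Y j k') (fun i _ => h1 i j)]
    refine Finset.sum_congr rfl fun i _ => ?_
    rw [intervalIntegral.integral_mul_const, intervalIntegral.integral_const_mul]
  simp only [Matrix.mul_apply, Matrix.of_apply, Finset.sum_mul, h2, Finset.mul_sum]
  refine Finset.sum_congr rfl fun j _ => Finset.sum_congr rfl fun i _ => by ring

lemma trace_int {ω : ℝ} (c : ℂ) {G : ℝ → Matrix ι ι ℂ} (hG : Continuous G)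
    (X : Matrix κ ι ℂ) (Y : Matrix ι κ ℂ) :
    (X * (Matrix.of fun i j => c * ∫ ν in (-ω)..ω, G ν i j) * Y).trace
      = c * ∫ ν in (-ω)..ω, (X * G ν * Y).trace := by
  rw [trace_eq_sum_diag]
  have h1 : ∀ k : κ, (X * (Matrix.of fun i j => c * ∫ ν in (-ω)..ω, G ν i j) * Y) k k
      = c * ∫ ν in (-ω)..ω, (X * G ν * Y) k k := fun k => entry_int c hG X Y k k
  rw [Finset.sum_congr rfl fun k _ => h1 k, ← Finset.mul_sum,
    ← intervalIntegral.integral_finset_sum (f := fun k ν => (X * G ν * Y) k k)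
      (fun k _ => (((continuous_const.matrix_mul hG).matrix_mul
        continuous_const).matrix_elem k k).intervalIntegrable _ _)]
  exact congrArg (c * ·) (intervalIntegral.integral_congr
    fun ν _ => (trace_eq_sum_diag _).symm)

lemma continuous_resolv {A : Matrix ι ι ℂ}
    (hA : ∀ μ ∈ spectrum ℂ A, μ.re < 0) :
    Continuous fun ν : ℝ => resolvMat A ν := by
  have hS : Continuous fun ν : ℝ =>
      (Complex.I * (ν : ℂ)) • (1 : Matrix ι ι ℂ) - A :=
    ((continuous_const.mul Complex.continuous_ofReal).smul continuous_const).sub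
      continuous_const
  rw [continuous_iff_continuousAt]
  intro ν
  have hunit : IsUnit ((Complex.I * (ν : ℂ)) • (1 : Matrix ι ι ℂ) - A) := by
    have hns : (Complex.I * (ν : ℂ)) ∉ spectrum ℂ A := by
      intro h
      have := hA _ h
      simp [Complex.mul_re, Complex.I_re, Complex.I_im] at this
    rw [spectrum.mem_iff, not_not, Algebra.algebraMap_eq_smul_one] at hns
    exact hns
  have hdet : ((Complex.I * (ν : ℂ)) • (1 : Matrix ι ι ℂ) - A).det ≠ 0 :=
    ((Matrix.isUnit_iff_isUnit_det _).mp hunit).ne_zero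
  have hRi : ContinuousAt (Ring.inverse : ℂ → ℂ)
      ((Complex.I * (ν : ℂ)) • (1 : Matrix ι ι ℂ) - A).det := by
    rw [Ring.inverse_eq_inv']
    exact continuousAt_inv₀ hdet
  exact ContinuousAt.comp (continuousAt_matrix_inv _ hRi) hS.continuousAt

end Aux

/-- `‖G‖²_{H₂,ω} = trace(Bᵀ (Y_ω + Z_ω) B)` for an LQO system with Hurwitz
`A` and symmetric output matrices `Mᵢ`. -/
theorem H2fl_norm_eq_trace
    {n m q p : ℕ} (A : Matrix (Fin n) (Fin n) ℝ) (B : Matrix (Fin n) (Fin m) ℝ)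
    (C : Matrix (Fin q) (Fin n) ℝ) (M : Fin p → Matrix (Fin n) (Fin n) ℝ)
    (hA : ∀ μ ∈ spectrum ℂ (A.map Complex.ofReal), μ.re < 0)
    (hM : ∀ l, (M l)ᵀ = M l)
    (ω : ℝ) (hω : 0 < ω) :
    H2flSq (A.map Complex.ofReal) (B.map Complex.ofReal) (C.map Complex.ofReal)
        (fun l => (M l).map Complex.ofReal) ω
      = ((B.map Complex.ofReal)ᵀ *
          (Yfl (A.map Complex.ofReal) (C.map Complex.ofReal) ω
            + Zfl (A.map Complex.ofReal) (B.map Complex.ofReal)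
                (fun l => (M l).map Complex.ofReal) ω)
          * B.map Complex.ofReal).trace := by
  classical
  set A' := A.map Complex.ofReal with hA'def
  set B' := B.map Complex.ofReal with hB'def
  set C' := C.map Complex.ofReal with hC'def
  set M' : Fin p → Matrix (Fin n) (Fin n) ℂ := fun l => (M l).map Complex.ofReal
    with hM'def
  have hR : Continuous fun ν : ℝ => resolvMat A' ν := continuous_resolv hA
  -- conjugate-transpose facts for real matrices
  have hBH : B'ᴴ = B'ᵀ := by
    ext i j
    simp [hB'def, Complex.conj_ofReal]
  have hBtH : (B'ᵀ)ᴴ = B' := by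
    ext i j
    simp [hB'def, Complex.conj_ofReal]
  have hCH : C'ᴴ = C'ᵀ := by
    ext i j
    simp [hC'def, Complex.conj_ofReal]
  have hMH : ∀ l, (M' l)ᴴ = M' l := by
    intro l
    ext i j
    simp only [hM'def, Matrix.conjTranspose_apply, Matrix.map_apply, Complex.conj_ofReal,
      RCLike.star_def]
    have h0 := congrFun (congrFun (hM l) j) i
    rw [Matrix.transpose_apply] at h0
    exact congrArg Complex.ofReal h0.symm
  -- continuity helpers
  have hg : Continuous fun ν : ℝ => (resolvMat A' ν)ᴴ * C'ᵀ * C' * resolvMat A' ν :=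
    ((hR.matrix_conjTranspose.matrix_mul continuous_const).matrix_mul
      continuous_const).matrix_mul hR
  have hu : Continuous fun ν : ℝ => resolvMat A' ν * B' * B'ᴴ * (resolvMat A' ν)ᴴ :=
    ((hR.matrix_mul continuous_const).matrix_mul
      continuous_const).matrix_mul hR.matrix_conjTranspose
  -- ## first term
  have hptw1 : ∀ ν : ℝ, (C' * resolvMat A' ν * B')ᴴ * (C' * resolvMat A' ν * B')
      = B'ᵀ * ((resolvMat A' ν)ᴴ * C'ᵀ * C' * resolvMat A' ν) * B' := by
    intro ν
    simp only [Matrix.conjTranspose_mul, hBH, hCH]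
    simp [Matrix.mul_assoc]
  have eq1 : (Matrix.of fun i j => (1 / (2 * (Real.pi : ℂ))) *
      ∫ ν in (-ω)..ω,
        ((C' * resolvMat A' ν * B')ᴴ * (C' * resolvMat A' ν * B')) i j :
        Matrix (Fin m) (Fin m) ℂ).trace
      = (B'ᵀ * Yfl A' C' ω * B').trace := by
    have hmat : (Matrix.of fun i j => (1 / (2 * (Real.pi : ℂ))) *
        ∫ ν in (-ω)..ω,
          ((C' * resolvMat A' ν * B')ᴴ * (C' * resolvMat A' ν * B')) i j :
          Matrix (Fin m) (Fin m) ℂ)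
        = B'ᵀ * Yfl A' C' ω * B' := by
      ext k k'
      rw [Matrix.of_apply]
      simp only [hptw1]
      rw [Yfl]
      exact (entry_int _ hg B'ᵀ B' k k').symm
    rw [hmat]
  -- ## second term
  -- pointwise algebra
  have hTl : ∀ (ν₁ ν₂ : ℝ) (l : Fin p),
      (B'ᵀ * (resolvMat A' ν₁)ᴴ * M' l * resolvMat A' ν₂ * B')
        * (B'ᵀ * (resolvMat A' ν₁)ᴴ * M' l * resolvMat A' ν₂ * B')ᴴ
      = (B'ᵀ * (resolvMat A' ν₁)ᴴ * M' l)
          * (resolvMat A' ν₂ * B' * B'ᴴ * (resolvMat A' ν₂)ᴴ)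
          * (M' l * (resolvMat A' ν₁ * B')) := by
    intro ν₁ ν₂ l
    simp only [Matrix.conjTranspose_mul, Matrix.conjTranspose_conjTranspose,
      hBtH, hMH, hBH]
    simp [Matrix.mul_assoc]
  have htr : ∀ ν₁ ν₂ : ℝ,
      (∑ l, (B'ᵀ * (resolvMat A' ν₁)ᴴ * M' l * resolvMat A' ν₂ * B')ᴴ
        * (B'ᵀ * (resolvMat A' ν₁)ᴴ * M' l * resolvMat A' ν₂ * B') :
        Matrix (Fin m) (Fin m) ℂ).trace
      = ∑ l, ((B'ᵀ * (resolvMat A' ν₁)ᴴ * M' l)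
          * (resolvMat A' ν₂ * B' * B'ᴴ * (resolvMat A' ν₂)ᴴ)
          * (M' l * (resolvMat A' ν₁ * B'))).trace := by
    intro ν₁ ν₂
    rw [Matrix.trace_sum]
    refine Finset.sum_congr rfl fun l _ => ?_
    rw [Matrix.trace_mul_comm, hTl ν₁ ν₂ l]
  have halg : ∀ (Z : Matrix (Fin n) (Fin n) ℂ) (ν₁ : ℝ),
      (∑ l, (B'ᵀ * (resolvMat A' ν₁)ᴴ * M' l) * Z * (M' l * (resolvMat A' ν₁ * B')))
      = B'ᵀ * ((resolvMat A' ν₁)ᴴ * (∑ l, M' l * Z * M' l) * resolvMat A' ν₁) * B' := by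
    intro Z ν₁
    simp [Matrix.mul_sum, Matrix.sum_mul, Matrix.mul_assoc]
  -- inner integral evaluates to Pfl
  have stepC : ∀ ν₁ : ℝ,
      (1 / (2 * (Real.pi : ℂ))) * ∫ ν₂ in (-ω)..ω,
        (∑ l, (B'ᵀ * (resolvMat A' ν₁)ᴴ * M' l * resolvMat A' ν₂ * B')ᴴ
          * (B'ᵀ * (resolvMat A' ν₁)ᴴ * M' l * resolvMat A' ν₂ * B') :
          Matrix (Fin m) (Fin m) ℂ).trace
      = (B'ᵀ * ((resolvMat A' ν₁)ᴴ * (∑ l, M' l * Pfl A' B' ω * M' l)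
          * resolvMat A' ν₁) * B').trace := by
    intro ν₁
    have h1 : (∫ ν₂ in (-ω)..ω,
        (∑ l, (B'ᵀ * (resolvMat A' ν₁)ᴴ * M' l * resolvMat A' ν₂ * B')ᴴ
          * (B'ᵀ * (resolvMat A' ν₁)ᴴ * M' l * resolvMat A' ν₂ * B') :
          Matrix (Fin m) (Fin m) ℂ).trace)
        = ∑ l, ∫ ν₂ in (-ω)..ω, ((B'ᵀ * (resolvMat A' ν₁)ᴴ * M' l)
            * (resolvMat A' ν₂ * B' * B'ᴴ * (resolvMat A' ν₂)ᴴ)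
            * (M' l * (resolvMat A' ν₁ * B'))).trace := by
      rw [intervalIntegral.integral_congr (g := fun ν₂ =>
        ∑ l, ((B'ᵀ * (resolvMat A' ν₁)ᴴ * M' l)
          * (resolvMat A' ν₂ * B' * B'ᴴ * (resolvMat A' ν₂)ᴴ)
          * (M' l * (resolvMat A' ν₁ * B'))).trace) (fun ν₂ _ => htr ν₁ ν₂)]
      rw [intervalIntegral.integral_finset_sum (f := fun l ν₂ =>
        ((B'ᵀ * (resolvMat A' ν₁)ᴴ * M' l)
          * (resolvMat A' ν₂ * B' * B'ᴴ * (resolvMat A' ν₂)ᴴ)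
          * (M' l * (resolvMat A' ν₁ * B'))).trace)
        (fun l _ => (((continuous_const.matrix_mul hu).matrix_mul
          continuous_const).matrix_trace).intervalIntegrable _ _)]
    rw [h1, Finset.mul_sum]
    have h2 : ∀ l : Fin p, (1 / (2 * (Real.pi : ℂ))) * ∫ ν₂ in (-ω)..ω,
        ((B'ᵀ * (resolvMat A' ν₁)ᴴ * M' l)
          * (resolvMat A' ν₂ * B' * B'ᴴ * (resolvMat A' ν₂)ᴴ)
          * (M' l * (resolvMat A' ν₁ * B'))).trace
        = ((B'ᵀ * (resolvMat A' ν₁)ᴴ * M' l) * Pfl A' B' ω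
            * (M' l * (resolvMat A' ν₁ * B'))).trace := by
      intro l
      rw [Pfl]
      exact (trace_int _ hu _ _).symm
    rw [Finset.sum_congr rfl fun l _ => h2 l, ← Matrix.trace_sum, halg (Pfl A' B' ω) ν₁]
  -- joint continuity of the double-integrand
  have hFc : Continuous fun z : ℝ × ℝ =>
      (∑ l, (B'ᵀ * (resolvMat A' z.1)ᴴ * M' l * resolvMat A' z.2 * B')ᴴ
        * (B'ᵀ * (resolvMat A' z.1)ᴴ * M' l * resolvMat A' z.2 * B') :
        Matrix (Fin m) (Fin m) ℂ) := by
    apply continuous_finset_sum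
    intro l _
    have h1 : Continuous fun z : ℝ × ℝ =>
        B'ᵀ * (resolvMat A' z.1)ᴴ * M' l * resolvMat A' z.2 * B' :=
      (((continuous_const.matrix_mul
        ((hR.comp continuous_fst).matrix_conjTranspose)).matrix_mul
          continuous_const).matrix_mul (hR.comp continuous_snd)).matrix_mul
        continuous_const
    exact h1.matrix_conjTranspose.matrix_mul h1
  have hF2 : ∀ ν₁ : ℝ, Continuous fun ν₂ : ℝ =>
      (∑ l, (B'ᵀ * (resolvMat A' ν₁)ᴴ * M' l * resolvMat A' ν₂ * B')ᴴ
        * (B'ᵀ * (resolvMat A' ν₁)ᴴ * M' l * resolvMat A' ν₂ * B') :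
        Matrix (Fin m) (Fin m) ℂ) := by
    intro ν₁
    apply continuous_finset_sum
    intro l _
    have h1 : Continuous fun ν₂ : ℝ =>
        B'ᵀ * (resolvMat A' ν₁)ᴴ * M' l * resolvMat A' ν₂ * B' :=
      (continuous_const.matrix_mul hR).matrix_mul continuous_const
    exact h1.matrix_conjTranspose.matrix_mul h1
  have hInner : ∀ k : Fin m, Continuous fun ν₁ : ℝ =>
      ∫ ν₂ in (-ω)..ω,
        (∑ l, (B'ᵀ * (resolvMat A' ν₁)ᴴ * M' l * resolvMat A' ν₂ * B')ᴴ
          * (B'ᵀ * (resolvMat A' ν₁)ᴴ * M' l * resolvMat A' ν₂ * B') :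
          Matrix (Fin m) (Fin m) ℂ) k k := by
    intro k
    refine intervalIntegral.continuous_parametric_intervalIntegral_of_continuous'
      (f := fun ν₁ ν₂ : ℝ =>
        (∑ l, (B'ᵀ * (resolvMat A' ν₁)ᴴ * M' l * resolvMat A' ν₂ * B')ᴴ
          * (B'ᵀ * (resolvMat A' ν₁)ᴴ * M' l * resolvMat A' ν₂ * B') :
          Matrix (Fin m) (Fin m) ℂ) k k) ?_ (-ω) ω
    rw [Function.uncurry_def]
    exact hFc.matrix_elem k k
  have eq2 : (Matrix.of fun i j => (1 / (2 * (Real.pi : ℂ)))^2 *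
      ∫ ν₁ in (-ω)..ω, ∫ ν₂ in (-ω)..ω,
        (∑ l, (B'ᵀ * (resolvMat A' ν₁)ᴴ * M' l * resolvMat A' ν₂ * B')ᴴ
          * (B'ᵀ * (resolvMat A' ν₁)ᴴ * M' l * resolvMat A' ν₂ * B')) i j :
        Matrix (Fin m) (Fin m) ℂ).trace
      = (B'ᵀ * Zfl A' B' M' ω * B').trace := by
    rw [trace_eq_sum_diag]
    simp only [Matrix.of_apply]
    rw [← Finset.mul_sum]
    rw [← intervalIntegral.integral_finset_sum (f := fun k ν₁ =>
      ∫ ν₂ in (-ω)..ω,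
        (∑ l, (B'ᵀ * (resolvMat A' ν₁)ᴴ * M' l * resolvMat A' ν₂ * B')ᴴ
          * (B'ᵀ * (resolvMat A' ν₁)ᴴ * M' l * resolvMat A' ν₂ * B') :
          Matrix (Fin m) (Fin m) ℂ) k k)
      (fun k _ => (hInner k).intervalIntegrable _ _)]
    have hswap : ∀ ν₁ : ℝ, (∑ k, ∫ ν₂ in (-ω)..ω,
        (∑ l, (B'ᵀ * (resolvMat A' ν₁)ᴴ * M' l * resolvMat A' ν₂ * B')ᴴ
          * (B'ᵀ * (resolvMat A' ν₁)ᴴ * M' l * resolvMat A' ν₂ * B') :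
          Matrix (Fin m) (Fin m) ℂ) k k)
        = ∫ ν₂ in (-ω)..ω,
        (∑ l, (B'ᵀ * (resolvMat A' ν₁)ᴴ * M' l * resolvMat A' ν₂ * B')ᴴ
          * (B'ᵀ * (resolvMat A' ν₁)ᴴ * M' l * resolvMat A' ν₂ * B') :
          Matrix (Fin m) (Fin m) ℂ).trace := by
      intro ν₁
      rw [← intervalIntegral.integral_finset_sum (f := fun (k : Fin m) ν₂ =>
        (∑ l, (B'ᵀ * (resolvMat A' ν₁)ᴴ * M' l * resolvMat A' ν₂ * B')ᴴ
          * (B'ᵀ * (resolvMat A' ν₁)ᴴ * M' l * resolvMat A' ν₂ * B') :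
          Matrix (Fin m) (Fin m) ℂ) k k)
        (fun k _ => (((hF2 ν₁).matrix_elem k k)).intervalIntegrable _ _)]
      exact intervalIntegral.integral_congr fun ν₂ _ => (trace_eq_sum_diag _).symm
    rw [intervalIntegral.integral_congr (g := fun ν₁ => ∫ ν₂ in (-ω)..ω,
        (∑ l, (B'ᵀ * (resolvMat A' ν₁)ᴴ * M' l * resolvMat A' ν₂ * B')ᴴ
          * (B'ᵀ * (resolvMat A' ν₁)ᴴ * M' l * resolvMat A' ν₂ * B') :
          Matrix (Fin m) (Fin m) ℂ).trace) (fun ν₁ _ => hswap ν₁)]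
    have hpow : ∀ I : ℂ, (1 / (2 * (Real.pi : ℂ)))^2 * I
        = (1 / (2 * (Real.pi : ℂ))) * ((1 / (2 * (Real.pi : ℂ))) * I) := by
      intro I; ring
    rw [hpow, ← intervalIntegral.integral_const_mul]
    rw [intervalIntegral.integral_congr (g := fun ν₁ =>
      (B'ᵀ * ((resolvMat A' ν₁)ᴴ * (∑ l, M' l * Pfl A' B' ω * M' l)
        * resolvMat A' ν₁) * B').trace) (fun ν₁ _ => stepC ν₁)]
    have hGW : Continuous fun ν₁ : ℝ => (resolvMat A' ν₁)ᴴ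
        * (∑ l, M' l * Pfl A' B' ω * M' l) * resolvMat A' ν₁ :=
      (hR.matrix_conjTranspose.matrix_mul continuous_const).matrix_mul hR
    rw [Zfl]
    exact (trace_int _ hGW B'ᵀ B').symm
  rw [H2flSq, eq1, eq2, Matrix.mul_add, Matrix.add_mul, Matrix.trace_add]
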